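/- (Cramér–Rao bound for the Gaussian linear model.) Let p, N be positive integers, let A be a real p×N matrix such that A Aᵀ is invertible, set V = (A Aᵀ)⁻¹, let σ > 0 and g ∈ ℝᵖ. Let T : ℝᴺ → ℝ be square-integrable with respect to N(Aᵀγ, σ²I_N) for every γ ∈ ℝᵖ and unbiased for gᵀγ, i.e., E_{y ∼ N(Aᵀγ, σ²I_N)}[T(y)] = gᵀγ for all γ ∈ ℝᵖ. Then for every γ ∈ ℝᵖ the variance of T under y ∼ N(Aᵀγ, σ²I_N) satisfies Var(T) ≥ σ² gᵀ V g. -/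

import Mathlib

/-!
Shifting the mean of `N(μ, σ²I)` by `v` multiplies its density by the likelihood ratio
`L_v(y) = exp(⟪v, y - μ⟫/σ² - |v|²/(2σ²))`, which has mean `1` and variance `exp(|v|²/σ²) - 1`.
The covariance of `T` with `L_v` is therefore `E_{μ+v} T - E_μ T`, and Cauchy–Schwarz gives the
Hammersley–Chapman–Robbins bound `(E_{μ+v} T - E_μ T)² ≤ Var T · (exp(|v|²/σ²) - 1)`.
For `v = t Aᵀ V g` unbiasedness makes the left side `t² (gᵀVg)²`, while `|v|² = t² gᵀVg`;
dividing by `t²` and letting `t → 0` gives the Cramér–Rao bound.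
-/

open MeasureTheory Matrix Real

noncomputable def gaussianPi (N : ℕ) (μ : Fin N → ℝ) (σ : ℝ) : Measure (Fin N → ℝ) :=
  volume.withDensity (fun y => ENNReal.ofReal
    ((2 * Real.pi * σ ^ 2) ^ (-(N : ℝ) / 2) *
      Real.exp (- (∑ i, (y i - μ i) ^ 2) / (2 * σ ^ 2))))

open ProbabilityTheory Filter Topology

section Probability

variable {Ω : Type*} {mΩ : MeasurableSpace Ω} {μ : Measure Ω} {X Y : Ω → ℝ}

theorem covariance_sq_le_variance_mul_variance [IsFiniteMeasure μ]
    (hX : MemLp X 2 μ) (hY : MemLp Y 2 μ) : cov[X, Y; μ] ^ 2 ≤ Var[X; μ] * Var[Y; μ] := by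
  have hquad : ∀ t : ℝ, 0 ≤ Var[Y; μ] * (t * t) + 2 * cov[X, Y; μ] * t + Var[X; μ] := by
    intro t
    have h := variance_nonneg (X + t • Y) μ
    rw [variance_add hX (hY.const_smul t), covariance_smul_right, variance_smul] at h
    linarith
  have := discrim_le_zero hquad
  rw [discrim] at this
  nlinarith

theorem sq_integral_mul_sub_integral_le [IsProbabilityMeasure μ] {L T : Ω → ℝ}
    (hL : MemLp L 2 μ) (hT : MemLp T 2 μ) (hL1 : μ[L] = 1) :
    (∫ ω, L ω * T ω ∂μ - μ[T]) ^ 2 ≤ Var[T; μ] * Var[L; μ] := by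
  have hcov : cov[T, L; μ] = ∫ ω, L ω * T ω ∂μ - μ[T] := by
    rw [covariance_eq_sub hT hL, hL1, mul_one]
    simp only [Pi.mul_apply, mul_comm]
  rw [← hcov]
  exact covariance_sq_le_variance_mul_variance hT hL

end Probability

section GaussianPi

variable {N : ℕ} {σ : ℝ}

noncomputable def gaussianPiPDF (N : ℕ) (μ : Fin N → ℝ) (σ : ℝ) (y : Fin N → ℝ) : ℝ :=
  (2 * π * σ ^ 2) ^ (-(N : ℝ) / 2) * exp (-(∑ i, (y i - μ i) ^ 2) / (2 * σ ^ 2))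

theorem gaussianPi_eq_withDensity (μ : Fin N → ℝ) :
    gaussianPi N μ σ = volume.withDensity fun y => ENNReal.ofReal (gaussianPiPDF N μ σ y) :=
  rfl

theorem gaussianPiPDF_eq_prod (hσ : σ ≠ 0) (μ y : Fin N → ℝ) :
    gaussianPiPDF N μ σ y = ∏ i, gaussianPDFReal (μ i) (σ ^ 2).toNNReal (y i) := by
  have hc : 0 < 2 * π * σ ^ 2 := by positivity
  simp only [gaussianPDFReal, Real.coe_toNNReal _ (sq_nonneg σ), Finset.prod_mul_distrib,
    Finset.prod_const, Finset.card_univ, Fintype.card_fin, ← exp_sum, gaussianPiPDF]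
  congr 1
  · rw [sqrt_eq_rpow, ← rpow_neg hc.le, ← rpow_mul_natCast hc.le]
    congr 1; ring
  · rw [← Finset.sum_div, ← Finset.sum_neg_distrib]

theorem gaussianPiPDF_pos (hσ : σ ≠ 0) (μ y : Fin N → ℝ) : 0 < gaussianPiPDF N μ σ y := by
  unfold gaussianPiPDF; positivity

theorem measurable_gaussianPiPDF (μ : Fin N → ℝ) : Measurable (gaussianPiPDF N μ σ) := by
  unfold gaussianPiPDF; fun_prop

theorem integral_gaussianPiPDF (hσ : σ ≠ 0) (μ : Fin N → ℝ) :
    ∫ y, gaussianPiPDF N μ σ y = 1 := by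
  have hv : (σ ^ 2).toNNReal ≠ 0 := by simpa using hσ
  simp_rw [gaussianPiPDF_eq_prod hσ, volume_pi,
    integral_fintype_prod_eq_prod (fun i => gaussianPDFReal (μ i) (σ ^ 2).toNNReal),
    integral_gaussianPDFReal_eq_one _ hv, Finset.prod_const_one]

theorem isProbabilityMeasure_gaussianPi (hσ : σ ≠ 0) (μ : Fin N → ℝ) :
    IsProbabilityMeasure (gaussianPi N μ σ) := by
  constructor
  have hint : Integrable (gaussianPiPDF N μ σ) :=
    .of_integral_ne_zero (by simp [integral_gaussianPiPDF hσ])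
  rw [gaussianPi_eq_withDensity, withDensity_apply _ MeasurableSet.univ, Measure.restrict_univ,
    ← ofReal_integral_eq_lintegral_ofReal hint (.of_forall fun y => (gaussianPiPDF_pos hσ μ y).le),
    integral_gaussianPiPDF hσ, ENNReal.ofReal_one]

theorem integral_gaussianPi (hσ : σ ≠ 0) (μ : Fin N → ℝ) (f : (Fin N → ℝ) → ℝ) :
    ∫ y, f y ∂gaussianPi N μ σ = ∫ y, gaussianPiPDF N μ σ y * f y := by
  rw [gaussianPi_eq_withDensity, integral_withDensity_eq_integral_toReal_smul
    (measurable_gaussianPiPDF μ).ennreal_ofReal (.of_forall fun _ => ENNReal.ofReal_lt_top)]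
  simp only [ENNReal.toReal_ofReal (gaussianPiPDF_pos hσ μ _).le, smul_eq_mul]

noncomputable def gaussianLikelihoodRatio (σ : ℝ) (μ v y : Fin N → ℝ) : ℝ :=
  exp (v ⬝ᵥ (y - μ) / σ ^ 2 - v ⬝ᵥ v / (2 * σ ^ 2))

theorem gaussianPiPDF_add (hσ : σ ≠ 0) (μ v y : Fin N → ℝ) :
    gaussianPiPDF N (μ + v) σ y = gaussianPiPDF N μ σ y * gaussianLikelihoodRatio σ μ v y := by
  have hsq : ∑ i, (y i - (μ + v) i) ^ 2
      = ∑ i, (y i - μ i) ^ 2 - 2 * v ⬝ᵥ (y - μ) + v ⬝ᵥ v := by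
    simp only [dotProduct, Pi.add_apply, Pi.sub_apply, Finset.mul_sum, ← Finset.sum_sub_distrib,
      ← Finset.sum_add_distrib]
    exact Finset.sum_congr rfl fun i _ => by ring
  rw [gaussianPiPDF, gaussianPiPDF, gaussianLikelihoodRatio, hsq, mul_assoc _ (exp _), ← exp_add]
  congr 2
  field_simp
  ring

theorem integral_gaussianPi_add (hσ : σ ≠ 0) (μ v : Fin N → ℝ) (f : (Fin N → ℝ) → ℝ) :
    ∫ y, f y ∂gaussianPi N (μ + v) σ
      = ∫ y, gaussianLikelihoodRatio σ μ v y * f y ∂gaussianPi N μ σ := by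
  simp only [integral_gaussianPi hσ, gaussianPiPDF_add hσ, mul_assoc]

theorem integral_gaussianLikelihoodRatio (hσ : σ ≠ 0) (μ v : Fin N → ℝ) :
    ∫ y, gaussianLikelihoodRatio σ μ v y ∂gaussianPi N μ σ = 1 := by
  have := isProbabilityMeasure_gaussianPi hσ (μ + v)
  simpa using (integral_gaussianPi_add hσ μ v fun _ => 1).symm

theorem gaussianLikelihoodRatio_sq (μ v y : Fin N → ℝ) :
    gaussianLikelihoodRatio σ μ v y ^ 2
      = exp (v ⬝ᵥ v / σ ^ 2) * gaussianLikelihoodRatio σ μ (2 • v) y := by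
  simp only [gaussianLikelihoodRatio, ← exp_nat_mul, ← exp_add, smul_dotProduct, dotProduct_smul]
  congr 1
  ring

theorem memLp_gaussianLikelihoodRatio (hσ : σ ≠ 0) (μ v : Fin N → ℝ) :
    MemLp (gaussianLikelihoodRatio σ μ v) 2 (gaussianPi N μ σ) := by
  refine (memLp_two_iff_integrable_sq (by unfold gaussianLikelihoodRatio; fun_prop)).2 ?_
  simp_rw [gaussianLikelihoodRatio_sq]
  refine Integrable.const_mul (.of_integral_ne_zero ?_) _
  simp [integral_gaussianLikelihoodRatio hσ]

theorem variance_gaussianLikelihoodRatio (hσ : σ ≠ 0) (μ v : Fin N → ℝ) :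
    Var[gaussianLikelihoodRatio σ μ v; gaussianPi N μ σ] = exp (v ⬝ᵥ v / σ ^ 2) - 1 := by
  have := isProbabilityMeasure_gaussianPi hσ μ
  rw [variance_eq_sub (memLp_gaussianLikelihoodRatio hσ μ v), integral_gaussianLikelihoodRatio hσ]
  simp only [Pi.pow_apply, gaussianLikelihoodRatio_sq, integral_const_mul,
    integral_gaussianLikelihoodRatio hσ]
  ring

theorem sq_integral_gaussianPi_add_sub_le (hσ : σ ≠ 0) {μ : Fin N → ℝ} {T : (Fin N → ℝ) → ℝ}
    (hT : MemLp T 2 (gaussianPi N μ σ)) (v : Fin N → ℝ) :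
    (∫ y, T y ∂gaussianPi N (μ + v) σ - ∫ y, T y ∂gaussianPi N μ σ) ^ 2
      ≤ Var[T; gaussianPi N μ σ] * (exp (v ⬝ᵥ v / σ ^ 2) - 1) := by
  have := isProbabilityMeasure_gaussianPi hσ μ
  rw [integral_gaussianPi_add hσ, ← variance_gaussianLikelihoodRatio hσ]
  exact sq_integral_mul_sub_integral_le (memLp_gaussianLikelihoodRatio hσ μ v) hT
    (integral_gaussianLikelihoodRatio hσ μ v)

end GaussianPi

theorem Matrix.transpose_mulVec_dotProduct_self {m n R : Type*} [Fintype m] [Fintype n]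
    [CommSemiring R] (A : Matrix m n R) (x : m → R) :
    (Aᵀ *ᵥ x) ⬝ᵥ (Aᵀ *ᵥ x) = x ⬝ᵥ (A * Aᵀ) *ᵥ x := by
  rw [dotProduct_mulVec, vecMul_transpose, ← mulVec_mulVec, dotProduct_comm]

theorem exp_sub_one_le_mul_exp (x : ℝ) : exp x - 1 ≤ x * exp x := by
  have h := add_one_le_exp (-x)
  calc exp x - 1 = exp x * (1 - exp (-x)) := by rw [mul_sub, ← exp_add]; simp
    _ ≤ exp x * x := mul_le_mul_of_nonneg_left (by linarith) (exp_pos x).le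
    _ = x * exp x := mul_comm _ _

theorem le_mul_of_forall_sq_mul_le_mul_exp_sub_one {a c V : ℝ} (hV : 0 ≤ V)
    (h : ∀ t : ℝ, t ^ 2 * a ≤ V * (exp (t ^ 2 * c) - 1)) : a ≤ V * c := by
  have hbound : ∀ t : ℝ, t ≠ 0 → a ≤ V * c * exp (t ^ 2 * c) := by
    intro t ht
    have ht2 : 0 < t ^ 2 := by positivity
    refine le_of_mul_le_mul_left ?_ ht2
    calc t ^ 2 * a ≤ V * (exp (t ^ 2 * c) - 1) := h t
      _ ≤ V * (t ^ 2 * c * exp (t ^ 2 * c)) :=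
        mul_le_mul_of_nonneg_left (exp_sub_one_le_mul_exp _) hV
      _ = t ^ 2 * (V * c * exp (t ^ 2 * c)) := by ring
  have hlim : Tendsto (fun t : ℝ => V * c * exp (t ^ 2 * c)) (𝓝[≠] 0) (𝓝 (V * c)) := by
    have hcont : Continuous fun t : ℝ => V * c * exp (t ^ 2 * c) := by fun_prop
    simpa using (hcont.tendsto 0).mono_left nhdsWithin_le_nhds
  exact ge_of_tendsto hlim (eventually_nhdsWithin_of_forall hbound)

theorem stmt1_general (p N : ℕ)
    (A : Matrix (Fin p) (Fin N) ℝ) (hA : IsUnit (A * Aᵀ).det)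
    (V : Matrix (Fin p) (Fin p) ℝ) (hV : V = (A * Aᵀ)⁻¹)
    (σ : ℝ) (hσ : 0 < σ) (g : Fin p → ℝ)
    (T : (Fin N → ℝ) → ℝ)
    (hT : ∀ γ : Fin p → ℝ, MemLp T 2 (gaussianPi N (Aᵀ.mulVec γ) σ))
    (hunbiased : ∀ γ : Fin p → ℝ,
      ∫ y, T y ∂(gaussianPi N (Aᵀ.mulVec γ) σ) = g ⬝ᵥ γ) :
    ∀ γ : Fin p → ℝ,
      σ ^ 2 * (g ⬝ᵥ V.mulVec g) ≤
        ProbabilityTheory.variance T (gaussianPi N (Aᵀ.mulVec γ) σ) := by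
  intro γ
  set q := g ⬝ᵥ V *ᵥ g
  set varT := Var[T; gaussianPi N (Aᵀ *ᵥ γ) σ]
  rcases le_or_gt q 0 with hq | hq
  · exact (mul_nonpos_of_nonneg_of_nonpos (sq_nonneg σ) hq).trans (variance_nonneg _ _)
  set w := Aᵀ *ᵥ V *ᵥ g
  have hnorm : w ⬝ᵥ w = q := by
    have hVg : (A * Aᵀ) *ᵥ V *ᵥ g = g := by
      rw [hV, mulVec_mulVec, mul_nonsing_inv _ hA, one_mulVec]
    rw [transpose_mulVec_dotProduct_self, hVg, dotProduct_comm]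
  have hshift : ∀ t : ℝ, t ^ 2 * q ^ 2 ≤ varT * (exp (t ^ 2 * (q / σ ^ 2)) - 1) := by
    intro t
    have h := sq_integral_gaussianPi_add_sub_le hσ.ne' (hT γ) (t • w)
    have hmean : Aᵀ *ᵥ γ + t • w = Aᵀ *ᵥ (γ + t • V *ᵥ g) := by rw [mulVec_add, mulVec_smul]
    rw [hmean, hunbiased, hunbiased, dotProduct_add, add_sub_cancel_left, dotProduct_smul,
      smul_dotProduct, dotProduct_smul, hnorm] at h
    rw [show t ^ 2 * q ^ 2 = (t * q) ^ 2 by ring,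
      show t ^ 2 * (q / σ ^ 2) = t * (t * q) / σ ^ 2 by ring]
    simpa only [smul_eq_mul] using h
  have hq2 := le_mul_of_forall_sq_mul_le_mul_exp_sub_one (variance_nonneg _ _) hshift
  rw [mul_div_assoc', le_div_iff₀ (by positivity)] at hq2
  nlinarith

/-- Cramér–Rao bound for the Gaussian linear model. -/
theorem stmt1 (p N : ℕ) (hp : 0 < p) (hN : 0 < N)
    (A : Matrix (Fin p) (Fin N) ℝ) (hA : IsUnit (A * Aᵀ).det)
    (V : Matrix (Fin p) (Fin p) ℝ) (hV : V = (A * Aᵀ)⁻¹)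
    (σ : ℝ) (hσ : 0 < σ) (g : Fin p → ℝ)
    (T : (Fin N → ℝ) → ℝ)
    (hT : ∀ γ : Fin p → ℝ, MemLp T 2 (gaussianPi N (Aᵀ.mulVec γ) σ))
    (hunbiased : ∀ γ : Fin p → ℝ,
      ∫ y, T y ∂(gaussianPi N (Aᵀ.mulVec γ) σ) = g ⬝ᵥ γ) :
    ∀ γ : Fin p → ℝ,
      σ ^ 2 * (g ⬝ᵥ V.mulVec g) ≤
        ProbabilityTheory.variance T (gaussianPi N (Aᵀ.mulVec γ) σ) :=
  stmt1_general p N A hA V hV σ hσ g T hT hunbiased
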